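/- Let α be a real number, set Q₁ = sinh(2α) − cosh(2α), Q₂ = (sinh²(2α) − sinh(2α)·cosh(2α))/cosh(2α), c = cosh(2α), s = sinh(2α). Let A = [[Q₂+Q₁, 0, 2, 0],[2Q₁, Q₁−Q₂, 0, −2],[−2, 0, Q₁−Q₂, 0],[0, 2, 2Q₁, Q₂+Q₁]], let D = [[1, 1, 0, 0],[1, 1, 0, 0],[0, 0, Q₁², Q₁²],[0, 0, Q₁², Q₁²]], and let V = (1/2)[[c, s, 0, 0],[s, c, 0, 0],[0, 0, c, −s],[0, 0, −s, c]]. Then A·V + V·Aᵀ + D = 0. -/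

import Mathlib

/-!
Write `c = cosh 2α`, `s = sinh 2α`. Then `Q₁ = s - c`, `Q₂ c = s Q₁`, and `c² - s² = 1`
gives `Q₁ (s + c) = -1`. Split into 2 × 2 blocks, the off-diagonal blocks of `A V + V Aᵀ`
cancel identically, and modulo multiples of `Q₂ c - s Q₁` every entry of the first diagonal
block of the equation reduces to `Q₁ (s + c) + 1 = 0` and every entry of the second to
`Q₁ (Q₁ - s + c) = 0`. So only these algebraic relations matter: the identity holds for any
point of the hyperbola `c² - s² = 1`, over any field of characteristic zero.
-/

open Matrix

noncomputable section

def Q1 (α : ℝ) : ℝ := Real.sinh (2*α) - Real.cosh (2*α)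

def Q2 (α : ℝ) : ℝ :=
  (Real.sinh (2*α)^2 - Real.sinh (2*α) * Real.cosh (2*α)) / Real.cosh (2*α)

/-- The drift matrix A of the first cascade realization. -/
def driftA (α : ℝ) : Matrix (Fin 4) (Fin 4) ℝ :=
  !![Q2 α + Q1 α, 0, 2, 0;
     2 * Q1 α, Q1 α - Q2 α, 0, -2;
     -2, 0, Q1 α - Q2 α, 0;
     0, 2, 2 * Q1 α, Q2 α + Q1 α]

/-- The diffusion matrix D = (1/2)BB† of the first cascade realization. -/
def diffD (α : ℝ) : Matrix (Fin 4) (Fin 4) ℝ :=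
  !![1, 1, 0, 0;
     1, 1, 0, 0;
     0, 0, Q1 α ^ 2, Q1 α ^ 2;
     0, 0, Q1 α ^ 2, Q1 α ^ 2]

/-- The covariance matrix of the two-mode squeezed state with squeezing parameter α. -/
def twoModeCov (α : ℝ) : Matrix (Fin 4) (Fin 4) ℝ :=
  (1/2 : ℝ) • !![Real.cosh (2*α), Real.sinh (2*α), 0, 0;
                 Real.sinh (2*α), Real.cosh (2*α), 0, 0;
                 0, 0, Real.cosh (2*α), -Real.sinh (2*α);
                 0, 0, -Real.sinh (2*α), Real.cosh (2*α)]

theorem cascade_lyapunov_of_hyperbola {K : Type*} [Field K] [CharZero K] {c s q r : K}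
    (hq : q = s - c) (hr : r * c = s * q) (hcs : c ^ 2 - s ^ 2 = 1) :
    !![r + q, 0, 2, 0; 2 * q, q - r, 0, -2; -2, 0, q - r, 0; 0, 2, 2 * q, r + q] *
        ((1/2 : K) • !![c, s, 0, 0; s, c, 0, 0; 0, 0, c, -s; 0, 0, -s, c]) +
      ((1/2 : K) • !![c, s, 0, 0; s, c, 0, 0; 0, 0, c, -s; 0, 0, -s, c]) *
        !![r + q, 0, 2, 0; 2 * q, q - r, 0, -2; -2, 0, q - r, 0; 0, 2, 2 * q, r + q]ᵀ +
      !![1, 1, 0, 0; 1, 1, 0, 0; 0, 0, q ^ 2, q ^ 2; 0, 0, q ^ 2, q ^ 2] = 0 := by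
  have hqsc : q * (s + c) = -1 := by linear_combination (s + c) * hq - hcs
  ext i j
  fin_cases i <;> fin_cases j <;>
    simp only [Matrix.add_apply, Matrix.mul_apply, Fin.sum_univ_four, Matrix.smul_apply,
      Matrix.transpose_apply, Matrix.cons_val', Matrix.cons_val_zero, Matrix.cons_val_one,
      Matrix.head_cons, Matrix.head_fin_const, Matrix.empty_val', Matrix.cons_val_fin_one,
      Matrix.cons_val_two, Matrix.cons_val_three, Matrix.tail_cons, Matrix.zero_apply,
      Matrix.of_apply, smul_eq_mul, Fin.reduceFinMk] <;>
    ring_nf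
  -- `ring_nf` closes the off-diagonal blocks; left are the entries of the two diagonal blocks
  · linear_combination hqsc + hr
  · linear_combination hqsc
  · linear_combination hqsc
  · linear_combination hqsc - hr
  · linear_combination q * hq - hr
  · linear_combination q * hq
  · linear_combination q * hq
  · linear_combination q * hq + hr

theorem Q2_mul_cosh (α : ℝ) : Q2 α * Real.cosh (2*α) = Real.sinh (2*α) * Q1 α := by
  rw [Q2, div_mul_cancel₀ _ (Real.cosh_pos _).ne', Q1]
  ring

theorem twoModeCov_lyapunov (α : ℝ) :
    driftA α * twoModeCov α + twoModeCov α * (driftA α)ᵀ + diffD α = 0 :=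
  cascade_lyapunov_of_hyperbola rfl (Q2_mul_cosh α) (Real.cosh_sq_sub_sinh_sq _)
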